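/- Under the stated Lipschitz and variance assumptions, the deviation between trajectories satisfies the one-step bound ‖x_{t+1} − x̃_{t+1}‖ ≤ ρ(ρ'+1)‖x_t − x̃_t‖ + ρ√M. -/

import Mathlib

open MeasureTheory

/-! Compare the true step with each sampled action `a ∼ μ x̃`: the Lipschitz bounds on `f` and `π`
give `‖f(x, π x) - f(x̃, a)‖ ≤ ρ(ρ' + 1)‖x - x̃‖ + ρ‖a - π x̃‖`. Averaging over `a` and applying
Jensen, `E‖a - π x̃‖ ≤ √(E‖a - π x̃‖²) ≤ √M`, gives the bound. -/

theorem integral_le_sqrt_integral_sq {α : Type*} [MeasurableSpace α] {μ : Measure α}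
    [IsProbabilityMeasure μ] {g : α → ℝ} (hg : MemLp g 2 μ) :
    ∫ a, g a ∂μ ≤ √(∫ a, g a ^ 2 ∂μ) := by
  have hsq : (∫ a, g a ∂μ) ^ 2 ≤ ∫ a, g a ^ 2 ∂μ := by
    have := ProbabilityTheory.variance_nonneg g μ
    rw [ProbabilityTheory.variance_eq_sub hg, sub_nonneg] at this
    simpa using this
  exact Real.le_sqrt_of_sq_le hsq

theorem norm_sub_integral_le_integral_norm_sub {α E : Type*} [MeasurableSpace α]
    [NormedAddCommGroup E] [NormedSpace ℝ E] [CompleteSpace E] {μ : Measure α}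
    [IsProbabilityMeasure μ]
    (c : E) {F : α → E} (hF : Integrable F μ) :
    ‖c - ∫ a, F a ∂μ‖ ≤ ∫ a, ‖c - F a‖ ∂μ :=
  calc ‖c - ∫ a, F a ∂μ‖ = ‖∫ a, (c - F a) ∂μ‖ := by
        rw [integral_sub (integrable_const c) hF, integral_const, probReal_univ, one_smul]
    _ ≤ ∫ a, ‖c - F a‖ ∂μ := norm_integral_le_integral_norm _

theorem norm_feedback_sub_le {X A Y : Type*} [SeminormedAddCommGroup X]
    [SeminormedAddCommGroup A] [SeminormedAddCommGroup Y] {f : X → A → Y} {π : X → A}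
    {ρ ρ' : ℝ} (hρ : 0 ≤ ρ) (hf : ∀ x y a b, ‖f x a - f y b‖ ≤ ρ * (‖x - y‖ + ‖a - b‖))
    (hπ : ∀ x y, ‖π x - π y‖ ≤ ρ' * ‖x - y‖) (x y : X) (a : A) :
    ‖f x (π x) - f y a‖ ≤ ρ * (ρ' + 1) * ‖x - y‖ + ρ * ‖a - π y‖ :=
  calc ‖f x (π x) - f y a‖ ≤ ρ * (‖x - y‖ + ‖π x - a‖) := hf _ _ _ _
    _ ≤ ρ * (‖x - y‖ + (ρ' * ‖x - y‖ + ‖a - π y‖)) := by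
        gcongr
        calc ‖π x - a‖ ≤ ‖π x - π y‖ + ‖π y - a‖ := norm_sub_le_norm_sub_add_norm_sub ..
          _ ≤ ρ' * ‖x - y‖ + ‖a - π y‖ := by rw [norm_sub_rev (π y)]; gcongr; exact hπ _ _
    _ = ρ * (ρ' + 1) * ‖x - y‖ + ρ * ‖a - π y‖ := by ring

theorem one_step_deviation_bound_general
    {n d : ℕ} [MeasurableSpace (EuclideanSpace ℝ (Fin d))] [BorelSpace (EuclideanSpace ℝ (Fin d))]
    (f : EuclideanSpace ℝ (Fin n) → EuclideanSpace ℝ (Fin d) → EuclideanSpace ℝ (Fin n))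
    (π : EuclideanSpace ℝ (Fin n) → EuclideanSpace ℝ (Fin d))
    (μ : EuclideanSpace ℝ (Fin n) → Measure (EuclideanSpace ℝ (Fin d)))
    [∀ x, IsProbabilityMeasure (μ x)]
    (ρ ρ' M : ℝ) (hρ : 0 ≤ ρ)
    (hf : ∀ x y a b, ‖f x a - f y b‖ ≤ ρ * (‖x - y‖ + ‖a - b‖))
    (hπ : ∀ x y, ‖π x - π y‖ ≤ ρ' * ‖x - y‖)
    (hvar : ∀ x, ∫ a, ‖a - π x‖ ^ 2 ∂(μ x) ≤ M)
    (hint : ∀ x, Integrable (fun a => f x a) (μ x))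
    (hint_sq : ∀ x, Integrable (fun a => ‖a - π x‖ ^ 2) (μ x))
    (xt xtil : EuclideanSpace ℝ (Fin n)) :
    ‖f xt (π xt) - ∫ a, f xtil a ∂(μ xtil)‖ ≤
      ρ * (ρ' + 1) * ‖xt - xtil‖ + ρ * Real.sqrt M := by
  set ν := μ xtil
  have hdev : MemLp (fun a => ‖a - π xtil‖) 2 ν :=
    (memLp_two_iff_integrable_sq (by fun_prop)).2 (hint_sq xtil)
  have hdev_int : Integrable (fun a => ρ * ‖a - π xtil‖) ν :=
    (hdev.integrable one_le_two).const_mul ρ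
  have hdev_mean : ∫ a, ‖a - π xtil‖ ∂ν ≤ √M :=
    (integral_le_sqrt_integral_sq hdev).trans (Real.sqrt_le_sqrt (hvar xtil))
  calc ‖f xt (π xt) - ∫ a, f xtil a ∂ν‖ ≤ ∫ a, ‖f xt (π xt) - f xtil a‖ ∂ν :=
        norm_sub_integral_le_integral_norm_sub _ (hint xtil)
    _ ≤ ∫ a, (ρ * (ρ' + 1) * ‖xt - xtil‖ + ρ * ‖a - π xtil‖) ∂ν :=
        integral_mono ((integrable_const _).sub (hint xtil)).norm
          ((integrable_const _).add hdev_int) (norm_feedback_sub_le hρ hf hπ xt xtil)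
    _ = ρ * (ρ' + 1) * ‖xt - xtil‖ + ρ * ∫ a, ‖a - π xtil‖ ∂ν := by
        rw [integral_add (integrable_const _) hdev_int, integral_const, probReal_univ, one_smul,
          integral_const_mul]
    _ ≤ ρ * (ρ' + 1) * ‖xt - xtil‖ + ρ * √M := by gcongr

/-- One-step deviation bound: ‖x_{t+1} − x̃_{t+1}‖ ≤ ρ(ρ'+1)‖x_t − x̃_t‖ + ρ√M. -/
theorem one_step_deviation_bound
    {n d : ℕ} [MeasurableSpace (EuclideanSpace ℝ (Fin d))] [BorelSpace (EuclideanSpace ℝ (Fin d))]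
    (f : EuclideanSpace ℝ (Fin n) → EuclideanSpace ℝ (Fin d) → EuclideanSpace ℝ (Fin n))
    (π : EuclideanSpace ℝ (Fin n) → EuclideanSpace ℝ (Fin d))
    (μ : EuclideanSpace ℝ (Fin n) → Measure (EuclideanSpace ℝ (Fin d)))
    [∀ x, IsProbabilityMeasure (μ x)]
    (ρ ρ' M : ℝ) (hρ : 0 ≤ ρ) (hρ' : 0 ≤ ρ') (hM : 0 ≤ M)
    (hf : ∀ x y a b, ‖f x a - f y b‖ ≤ ρ * (‖x - y‖ + ‖a - b‖))
    (hπ : ∀ x y, ‖π x - π y‖ ≤ ρ' * ‖x - y‖)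
    (hmean : ∀ x, ∫ a, a ∂(μ x) = π x)
    (hvar : ∀ x, ∫ a, ‖a - π x‖ ^ 2 ∂(μ x) ≤ M)
    (hint : ∀ x, Integrable (fun a => f x a) (μ x))
    (hint_id : ∀ x, Integrable (fun a : EuclideanSpace ℝ (Fin d) => a) (μ x))
    (hint_sq : ∀ x, Integrable (fun a => ‖a - π x‖ ^ 2) (μ x))
    (xt xtil : EuclideanSpace ℝ (Fin n)) :
    ‖f xt (π xt) - ∫ a, f xtil a ∂(μ xtil)‖ ≤
      ρ * (ρ' + 1) * ‖xt - xtil‖ + ρ * Real.sqrt M :=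
  one_step_deviation_bound_general f π μ ρ ρ' M hρ hf hπ hvar hint hint_sq xt xtil
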